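/- arXiv:2107.04754 — 3 statements merged into one kernel-verified Lean document; each statement's English description precedes it below -/
import Mathlib

section
/- For all v₁ ≥ v₂ > 0, ∫₀^{v₂} (2/z)·(z/v₁²)·(z/v₂²) dz = ∫_{v₁}^∞ (2/z)·(1/z)·(1/z) dz; that is, the Quadratics blend and the Uniforms blend induce the same correlated density 1/v₁². -/
open MeasureTheory

/-- The Quadratics blend and the Uniforms blend induce the same correlated density:
`∫₀^{v₂} (2/z)·(z/v₁²)·(z/v₂²) dz = ∫_{v₁}^∞ (2/z)·(1/z)·(1/z) dz`. -/
theorem quadratics_uniforms_dual_blend (v₁ v₂ : ℝ) (h12 : v₁ ≥ v₂) (h2 : v₂ > 0) :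
    ∫ z in (0:ℝ)..v₂, (2 / z) * (z / v₁ ^ 2) * (z / v₂ ^ 2)
      = ∫ z in Set.Ioi v₁, (2 / z) * (1 / z) * (1 / z) := by
  have h1 : (0:ℝ) < v₁ := lt_of_lt_of_le h2 h12
  have hL : ∫ z in (0:ℝ)..v₂, (2 / z) * (z / v₁ ^ 2) * (z / v₂ ^ 2)
      = 1 / v₁ ^ 2 := by
    have : ∀ z : ℝ, (2 / z) * (z / v₁ ^ 2) * (z / v₂ ^ 2)
        = (2 / (v₁ ^ 2 * v₂ ^ 2)) * z := by
      intro z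
      rcases eq_or_ne z 0 with rfl | hz
      · simp
      · field_simp
    rw [intervalIntegral.integral_congr (fun z _ => this z),
      intervalIntegral.integral_const_mul, integral_id]
    field_simp
    ring
  have hR : ∫ z in Set.Ioi v₁, (2 / z) * (1 / z) * (1 / z) = 1 / v₁ ^ 2 := by
    have hc : ∀ z ∈ Set.Ioi v₁, (2 / z) * (1 / z) * (1 / z)
        = 2 * z ^ (-3 : ℝ) := by
      intro z hz
      have hz0 : 0 < z := lt_trans h1 hz
      rw [Real.rpow_neg hz0.le, show (3:ℝ) = ((3:ℕ):ℝ) by norm_num,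
        Real.rpow_natCast]
      field_simp
    rw [setIntegral_congr_fun measurableSet_Ioi hc, integral_const_mul,
      integral_Ioi_rpow_of_lt (by norm_num) h1]
    rw [show (-3:ℝ) + 1 = -2 by norm_num, Real.rpow_neg h1.le,
      show (2:ℝ) = ((2:ℕ):ℝ) by norm_num, Real.rpow_natCast]
    field_simp
  rw [hL, hR]
end

section
/- The function L(h) = ((23/6)h − 7/2 − ln(h/2)) / (3h − 2) satisfies lim_{h→∞} L(h) = 23/18, and 23/18 = sup_{h ≥ 1} L(h). -/
open Filter Real

private lemma revenue_aux_lim :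
    Filter.Tendsto (fun h : ℝ => ((23 / 6) * h - 7 / 2 - Real.log (h / 2)) / (3 * h - 2))
        Filter.atTop (nhds (23 / 18)) := by
  have hlog : Tendsto (fun h : ℝ => Real.log h / h) atTop (nhds 0) :=
    Real.isLittleO_log_id_atTop.tendsto_div_nhds_zero
  have hinv : Tendsto (fun h : ℝ => h⁻¹) atTop (nhds (0 : ℝ)) := tendsto_inv_atTop_zero
  have hnum : Tendsto (fun h : ℝ => (23 / 6 : ℝ) - (7 / 2) * h⁻¹ - (Real.log h / h - Real.log 2 * h⁻¹))
      atTop (nhds (23 / 6)) := by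
    have := (((tendsto_const_nhds : Tendsto (fun _ : ℝ => (23 / 6 : ℝ)) atTop (nhds (23 / 6))).sub
      (hinv.const_mul (7 / 2))).sub (hlog.sub (hinv.const_mul (Real.log 2))))
    simpa using this
  have hden : Tendsto (fun h : ℝ => (3 : ℝ) - 2 * h⁻¹) atTop (nhds 3) := by
    simpa using tendsto_const_nhds.sub (hinv.const_mul (2 : ℝ))
  have h3 : (3 : ℝ) ≠ 0 := by norm_num
  have := hnum.div hden h3
  have hval : (23 / 6 : ℝ) / 3 = 23 / 18 := by norm_num
  rw [hval] at this
  refine this.congr' ?_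
  filter_upwards [eventually_ge_atTop (1 : ℝ)] with h hh
  have hh0 : (0 : ℝ) < h := lt_of_lt_of_le one_pos hh
  have hinv1 : h⁻¹ ≤ 1 := inv_le_one_of_one_le₀ hh
  have hd1 : (0 : ℝ) < 3 - 2 * h⁻¹ := by nlinarith [inv_pos.mpr hh0]
  have hd2 : (0 : ℝ) < 3 * h - 2 := by nlinarith
  simp only [Pi.div_apply]
  rw [Real.log_div (ne_of_gt hh0) (by norm_num), div_eq_div_iff hd1.ne' hd2.ne']
  field_simp

/-- The revenue lower bound `L(h) = ((23/6)h - 7/2 - ln(h/2))/(3h - 2)` tends to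
`23/18` as `h → ∞`, and `23/18` is the least upper bound of `L` over `h ≥ 1`. -/
theorem revenue_lower_bound_limit_and_sup :
    Filter.Tendsto (fun h : ℝ => ((23 / 6) * h - 7 / 2 - Real.log (h / 2)) / (3 * h - 2))
        Filter.atTop (nhds (23 / 18))
      ∧ IsLUB ((fun h : ℝ => ((23 / 6) * h - 7 / 2 - Real.log (h / 2)) / (3 * h - 2)) ''
          Set.Ici 1) (23 / 18) := by
  refine ⟨revenue_aux_lim, ?_, ?_⟩
  · rintro x ⟨h, hh, rfl⟩
    simp only [Set.mem_Ici] at hh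
    have hh0 : (0 : ℝ) < h := lt_of_lt_of_le one_pos hh
    have hden : (0 : ℝ) < 3 * h - 2 := by linarith
    rw [div_le_iff₀ hden]
    have hlog : Real.log (1 / 2 : ℝ) ≤ Real.log (h / 2) := by
      apply Real.log_le_log (by norm_num)
      linarith
    rw [Real.log_div one_ne_zero (by norm_num), Real.log_one] at hlog
    have h2 : Real.log 2 < 0.6931471808 := Real.log_two_lt_d9
    nlinarith
  · intro b hb
    refine le_of_tendsto revenue_aux_lim ?_
    filter_upwards [eventually_ge_atTop (1 : ℝ)] with h hh
    exact hb ⟨h, hh, rfl⟩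
end

section
/- With expected residual surplus M(h) = ((2+ln h)h − (1+ln h)e)/h for the two-piece-iron mechanism and L(h) = 1 + ln h for the 2-lottery on the truncated quadratic distribution, M(h) > L(h) if and only if h > (1 + ln h)·e; in particular M(h) > L(h) for all h ≥ 8.56. -/
lemma log_856_lt : Real.log 8.56 < 2.148 := by
  have goal : (8.56:ℝ) < Real.exp 2.148 := by
    have he : (2.7182818283:ℝ) < Real.exp 1 := Real.exp_one_gt_d9
    have ha : (1.004625:ℝ) ≤ Real.exp 0.004625 := by
      have := Real.add_one_le_exp (0.004625:ℝ); linarith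
    have e3 : (Real.exp 0.004625)^(32:ℕ) = Real.exp 0.148 := by
      rw [← Real.exp_nat_mul]; norm_num
    have e2 : Real.exp 2.148 = Real.exp 1 * Real.exp 1 * Real.exp 0.148 := by
      rw [← Real.exp_add, ← Real.exp_add]; norm_num
    have hb : (1.004625:ℝ)^(32:ℕ) ≤ Real.exp 0.148 := by
      rw [← e3]
      exact pow_le_pow_left₀ (by norm_num) ha 32
    have hc : (2.7182818283:ℝ) * 2.7182818283 * (1.004625:ℝ)^(32:ℕ)
        ≤ Real.exp 1 * Real.exp 1 * Real.exp 0.148 := by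
      have h1 : (0:ℝ) ≤ 2.7182818283 := by norm_num
      have h2 : (0:ℝ) ≤ (1.004625:ℝ)^(32:ℕ) := by positivity
      have := mul_le_mul (mul_le_mul he.le he.le h1 (Real.exp_pos 1).le) hb h2
        (by positivity)
      linarith
    have h8 : (8.56:ℝ) < 2.7182818283 * 2.7182818283 * (1.004625:ℝ)^(32:ℕ) := by
      norm_num
    linarith [e2 ▸ hc]
  calc Real.log 8.56 < Real.log (Real.exp 2.148) := Real.log_lt_log (by norm_num) goal
    _ = 2.148 := Real.log_exp _

lemma key856 : (1 + Real.log 8.56) * Real.exp 1 < 8.56 := by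
  have he2 : Real.exp 1 < 2.7182818286 := Real.exp_one_lt_d9
  have hpos : (0:ℝ) < Real.exp 1 := Real.exp_pos 1
  have hl : (0:ℝ) < Real.log 8.56 := Real.log_pos (by norm_num)
  nlinarith [log_856_lt]

/-- With `M(h) = ((2 + ln h)h - (1 + ln h)e)/h` the residual surplus of the
two-piece-iron mechanism and `L(h) = 1 + ln h` that of the 2-lottery on the
truncated quadratic distribution: for `h > 0`, `M(h) > L(h) ↔ h > (1 + ln h)·e`;
in particular `M(h) > L(h)` for all `h ≥ 8.56`. -/
theorem two_piece_iron_beats_lottery :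
    (∀ h : ℝ, h > 0 →
        (((2 + Real.log h) * h - (1 + Real.log h) * Real.exp 1) / h > 1 + Real.log h
          ↔ h > (1 + Real.log h) * Real.exp 1))
      ∧ (∀ h : ℝ, h ≥ 8.56 →
          ((2 + Real.log h) * h - (1 + Real.log h) * Real.exp 1) / h > 1 + Real.log h) := by
  have main : ∀ h : ℝ, h > 0 →
      (((2 + Real.log h) * h - (1 + Real.log h) * Real.exp 1) / h > 1 + Real.log h
        ↔ h > (1 + Real.log h) * Real.exp 1) := by
    intro h hp
    rw [gt_iff_lt, lt_div_iff₀ hp]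
    constructor <;> intro H <;> nlinarith [H]
  refine ⟨main, fun h hh => ?_⟩
  rw [main h (by linarith)]
  have hp : (0:ℝ) < h := by linarith
  have hl : Real.log (h / 8.56) ≤ h / 8.56 - 1 :=
    Real.log_le_sub_one_of_pos (by positivity)
  rw [Real.log_div (by positivity) (by norm_num)] at hl
  have he2 : Real.exp 1 < 2.7182818286 := Real.exp_one_lt_d9
  have h3 : Real.exp 1 * (Real.log h - Real.log 8.56) ≤ Real.exp 1 * (h / 8.56 - 1) :=
    mul_le_mul_of_nonneg_left hl (Real.exp_pos 1).le
  have h4 : Real.exp 1 * (h / 8.56 - 1) ≤ h - 8.56 := by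
    have hx : Real.exp 1 * (h / 8.56 - 1) = (Real.exp 1 / 8.56) * (h - 8.56) := by ring
    rw [hx]
    have hd : Real.exp 1 / 8.56 ≤ 1 := by
      rw [div_le_one (by norm_num)]; linarith
    have h5 : (Real.exp 1 / 8.56) * (h - 8.56) ≤ 1 * (h - 8.56) :=
      mul_le_mul_of_nonneg_right hd (by linarith)
    linarith
  nlinarith [key856, h3, h4]
end
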